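/- For n ≥ 1, the central binomial coefficient C(2n-1, n) is odd if and only if n is a power of 2. -/
import Mathlib

open Nat

lemma sum_digits_pos (n : ℕ) (hn : 0 < n) : 0 < (Nat.digits 2 n).sum := by
  rcases Nat.eq_zero_or_pos ((Nat.digits 2 n).sum) with h | h
  · exfalso
    have hne : Nat.digits 2 n ≠ [] := Nat.digits_ne_nil_iff_ne_zero.mpr hn.ne'
    have hlast := Nat.getLast_digit_ne_zero 2 hn.ne'
    have hmem : (Nat.digits 2 n).getLast hne ∈ Nat.digits 2 n := List.getLast_mem hne
    have := List.single_le_sum (fun x _ => Nat.zero_le x) _ hmem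
    omega
  · exact h

lemma sum_digits_one_iff (n : ℕ) (hn : 0 < n) :
    (Nat.digits 2 n).sum = 1 ↔ ∃ l, n = 2 ^ l := by
  induction n using Nat.strong_induction_on with
  | _ n ih =>
  rcases Nat.even_or_odd n with he | ho
  · obtain ⟨m, rfl⟩ := he
    have hm : 0 < m := by omega
    rw [show m + m = 2 * m by ring, Nat.digits_def' (by norm_num) (by omega)]
    simp only [Nat.mul_mod_right, Nat.mul_div_cancel_left _ (by norm_num : 0 < 2)]
    rw [List.sum_cons]
    rw [zero_add, ih m (by omega) hm]
    constructor
    · rintro ⟨l, rfl⟩; exact ⟨l + 1, by ring⟩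
    · rintro ⟨l, hl⟩
      cases l with
      | zero => omega
      | succ l => exact ⟨l, by rw [pow_succ] at hl; omega⟩
  · rw [Nat.digits_def' (by norm_num) hn]
    rw [List.sum_cons, Nat.odd_iff.mp ho]
    constructor
    · intro h
      have h2 : (Nat.digits 2 (n / 2)).sum = 0 := by omega
      have : n / 2 = 0 := by
        by_contra hc
        have := sum_digits_pos (n / 2) (Nat.pos_of_ne_zero hc)
        omega
      have : n = 1 := by omega
      exact ⟨0, by omega⟩
    · rintro ⟨l, rfl⟩
      cases l with
      | zero => simp
      | succ l =>
        exfalso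
        rw [Nat.odd_iff, pow_succ, Nat.mul_mod_left] at ho
        omega

theorem stmt (n : ℕ) (hn : 1 ≤ n) :
    Odd (Nat.choose (2 * n - 1) n) ↔ ∃ l : ℕ, n = 2 ^ l := by
  have key : 2 * Nat.choose (2 * n - 1) n = Nat.choose (2 * n) n := by
    obtain ⟨m, rfl⟩ : ∃ m, n = m + 1 := ⟨n - 1, by omega⟩
    have e1 : 2 * (m + 1) = (2 * m + 1) + 1 := by ring
    have e2 : 2 * (m + 1) - 1 = 2 * m + 1 := by omega
    have h1 : Nat.choose (2 * (m+1)) (m+1)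
        = Nat.choose (2*m+1) m + Nat.choose (2*m+1) (m+1) := by
      rw [e1, Nat.choose_succ_succ]
    have h2 : Nat.choose (2*m+1) m = Nat.choose (2*m+1) (m+1) := by
      have := Nat.choose_symm (n := 2*m+1) (k := m+1) (by omega)
      simpa [show 2*m+1-(m+1) = m by omega] using this
    rw [e2]
    omega
  have hval : padicValNat 2 (Nat.choose (2 * n) n) = (Nat.digits 2 n).sum := by
    haveI : Fact (Nat.Prime 2) := ⟨Nat.prime_two⟩
    have := @sub_one_mul_padicValNat_choose_eq_sub_sum_digits' 2 n n _
    simp only [show (2:ℕ) - 1 = 1 from rfl, one_mul] at this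
    rw [show n + n = 2 * n by ring] at this
    have hd : (Nat.digits 2 (2 * n)).sum = (Nat.digits 2 n).sum := by
      rw [Nat.digits_def' (by norm_num) (by omega)]
      simp [Nat.mul_div_cancel_left]
    rw [this, hd]
    have := Nat.digit_sum_le 2 n
    omega
  have hpos : 0 < Nat.choose (2 * n - 1) n := Nat.choose_pos (by omega)
  have hval2 : padicValNat 2 (Nat.choose (2 * n - 1) n) + 1 = (Nat.digits 2 n).sum := by
    haveI : Fact (Nat.Prime 2) := ⟨Nat.prime_two⟩
    rw [← hval, ← key, padicValNat.mul (by norm_num) (by omega), padicValNat.self (by norm_num)]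
    omega
  rw [← sum_digits_one_iff n (by omega)]
  haveI : Fact (Nat.Prime 2) := ⟨Nat.prime_two⟩
  have hdvd := dvd_iff_padicValNat_ne_zero (p := 2) hpos.ne'
  rw [Nat.odd_iff]
  omega
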